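/- arXiv:1901.06665 — 2 statements merged into one kernel-verified Lean document; each statement's English description precedes it below -/
import Mathlib

section
/- For all x₁, x₂, y₁, y₂, w₁, w₂ ∈ ℝ³ and S₁, S₂ ∈ 𝔰, the matrix commutator satisfies M(x₁,y₁,S₁,w₁)·M(x₂,y₂,S₂,w₂) − M(x₂,y₂,S₂,w₂)·M(x₁,y₁,S₁,w₁) = M(2·y₁×y₂ + S₁x₂ − S₂x₁ + w₁×x₂ + x₁×w₂, 2·x₁×x₂ + S₂y₁ − S₁y₂ + w₁×y₂ + y₁×w₂, 3·x₂⊙y₁ − 3·x₁⊙y₂ + [★⁻¹w₁, S₂] + [S₁, ★⁻¹w₂], (3/2)(x₁×y₂ + y₁×x₂) + ★[S₁,S₂] + w₁×w₂). In particular, the 14-dimensional image of M is a Lie subalgebra of the real 7×7 matrices under the commutator (the split real form 𝔤₂ˢ of the exceptional Lie algebra 𝔤₂). -/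
open Matrix

/-- The cross product on `ℝ³`. -/
def cross (x y : Fin 3 → ℝ) : Fin 3 → ℝ :=
  ![x 1 * y 2 - x 2 * y 1, x 2 * y 0 - x 0 * y 2, x 0 * y 1 - x 1 * y 0]

abbrev V3 := Fin 3 → ℝ

/-- The hat map `★⁻¹ : ℝ³ → so(3)`, with `(★⁻¹ v) u = v × u`. -/
def hat (v : V3) : Matrix (Fin 3) (Fin 3) ℝ :=
  Matrix.of ![![0, -v 2, v 1], ![v 2, 0, -v 0], ![-v 1, v 0, 0]]

/-- The map `★`, inverse of the hat map. -/
def starM (A : Matrix (Fin 3) (Fin 3) ℝ) : V3 := ![A 2 1, A 0 2, A 1 0]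

/-- The symmetrized traceless product `x ⊙ y`. -/
noncomputable def odot (x y : V3) : Matrix (Fin 3) (Fin 3) ℝ :=
  (1/2 : ℝ) • (vecMulVec y x + vecMulVec x y) - ((x ⬝ᵥ y) / 3) • (1 : Matrix (Fin 3) (Fin 3) ℝ)

/-- The matrix commutator. -/
def mcomm (A B : Matrix (Fin 3) (Fin 3) ℝ) : Matrix (Fin 3) (Fin 3) ℝ := A * B - B * A

/-- The linear map `M` sending `(x,y,S,w)` to the 7×7 block matrix with rows
`(0, −2yᵀ, −2xᵀ)`, `(x, S + ★⁻¹w, ★⁻¹y)`, `(y, ★⁻¹x, −S + ★⁻¹w)`, block sizes `1,3,3`. -/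
def M7 (x y : V3) (S : Matrix (Fin 3) (Fin 3) ℝ) (w : V3) :
    Matrix (Fin 1 ⊕ Fin 3 ⊕ Fin 3) (Fin 1 ⊕ Fin 3 ⊕ Fin 3) ℝ :=
  Matrix.of fun i j =>
    match i, j with
    | .inl _, .inl _ => 0
    | .inl _, .inr (.inl j) => -2 * y j
    | .inl _, .inr (.inr j) => -2 * x j
    | .inr (.inl i), .inl _ => x i
    | .inr (.inl i), .inr (.inl j) => (S + hat w) i j
    | .inr (.inl i), .inr (.inr j) => hat y i j
    | .inr (.inr i), .inl _ => y i
    | .inr (.inr i), .inr (.inl j) => hat x i j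
    | .inr (.inr i), .inr (.inr j) => (-S + hat w) i j

/-- The image of `M7` for symmetric traceless `S`: the split real form `𝔤₂ˢ` of the
exceptional Lie algebra `𝔤₂` inside the 7×7 real matrices. -/
def g2sSet : Set (Matrix (Fin 1 ⊕ Fin 3 ⊕ Fin 3) (Fin 1 ⊕ Fin 3 ⊕ Fin 3) ℝ) :=
  {A | ∃ (x y : V3) (S : Matrix (Fin 3) (Fin 3) ℝ) (w : V3),
    Sᵀ = S ∧ S.trace = 0 ∧ A = M7 x y S w}

/-!
Write `M(x, y, S, w)` as a block matrix with blocks of sizes `1, 3, 3` and compute the commutator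
block by block. Every block reduces to three identities for the hat map:
`★⁻¹a ★⁻¹b = b aᵀ - ⟨a, b⟩ I`, `★⁻¹(a × b) = b aᵀ - a bᵀ`, and `S ★⁻¹v + ★⁻¹v S = -★⁻¹(S v)`
for `S ∈ 𝔰`. In the diagonal `3 × 3` blocks the rank-one terms `-2 x yᵀ` coming from the border
combine with the rank-one part of `★⁻¹y ★⁻¹x`; this is where the coefficients `3` and `3/2` come
from.
-/

namespace Matrix

variable {R l m n o : Type*}

lemma fromBlocks_sub [Sub R] (A : Matrix n l R) (B : Matrix n m R) (C : Matrix o l R)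
    (D : Matrix o m R) (A' : Matrix n l R) (B' : Matrix n m R) (C' : Matrix o l R)
    (D' : Matrix o m R) :
    fromBlocks A B C D - fromBlocks A' B' C' D' =
      fromBlocks (A - A') (B - B') (C - C') (D - D') := by
  ext (i | i) (j | j) <;> rfl

lemma fromCols_sub [Sub R] (A : Matrix m l R) (B : Matrix m n R) (A' : Matrix m l R)
    (B' : Matrix m n R) : fromCols A B - fromCols A' B' = fromCols (A - A') (B - B') := by
  ext i (j | j) <;> rfl

lemma fromRows_sub [Sub R] (A : Matrix l m R) (B : Matrix n m R) (A' : Matrix l m R)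
    (B' : Matrix n m R) : fromRows A B - fromRows A' B' = fromRows (A - A') (B - B') := by
  ext (i | i) j <;> rfl

lemma replicateRow_sub [Sub R] (v w : m → R) :
    replicateRow l (v - w) = replicateRow l v - replicateRow l w := rfl

lemma replicateCol_sub [Sub R] (v w : m → R) :
    replicateCol l (v - w) = replicateCol l v - replicateCol l w := rfl

lemma replicateCol_mul_replicateRow [NonUnitalNonAssocSemiring R] [Fintype l] [Unique l]
    (v : m → R) (w : n → R) : replicateCol l v * replicateRow l w = vecMulVec v w := by
  ext
  simp [mul_apply, vecMulVec_apply]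

lemma vecMul_eq_mulVec_of_transpose_eq [CommSemiring R] [Fintype m] {S : Matrix m m R}
    (hS : Sᵀ = S) (v : m → R) : v ᵥ* S = S *ᵥ v := by
  rw [← vecMul_transpose, hS]

end Matrix

lemma cross_eq_crossProduct (x y : V3) : cross x y = x ⨯₃ y := (cross_apply x y).symm

lemma hat_mulVec (v u : V3) : hat v *ᵥ u = v ⨯₃ u := by
  ext i
  fin_cases i <;> simp [hat, cross_apply, mulVec, dotProduct, Fin.sum_univ_three] <;> ring

lemma vecMul_hat (u v : V3) : u ᵥ* hat v = u ⨯₃ v := by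
  ext i
  fin_cases i <;> simp [hat, cross_apply, vecMul, dotProduct, Fin.sum_univ_three] <;> ring

lemma transpose_hat (v : V3) : (hat v)ᵀ = -hat v := by
  ext i j
  fin_cases i <;> fin_cases j <;> simp [hat]

lemma hat_add (a b : V3) : hat (a + b) = hat a + hat b := by
  ext i j
  fin_cases i <;> fin_cases j <;> simp [hat] <;> ring

lemma hat_neg (a : V3) : hat (-a) = -hat a := by
  ext i j
  fin_cases i <;> fin_cases j <;> simp [hat]

lemma hat_sub (a b : V3) : hat (a - b) = hat a - hat b := by
  rw [sub_eq_add_neg, hat_add, hat_neg, ← sub_eq_add_neg]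

lemma hat_smul (c : ℝ) (a : V3) : hat (c • a) = c • hat a := by
  ext i j
  fin_cases i <;> fin_cases j <;> simp [hat]

lemma hat_crossProduct (a b : V3) : hat (a ⨯₃ b) = vecMulVec b a - vecMulVec a b := by
  ext i j
  fin_cases i <;> fin_cases j <;> simp [hat, cross_apply, vecMulVec_apply] <;> ring

lemma hat_mul_hat (a b : V3) : hat a * hat b = vecMulVec b a - (a ⬝ᵥ b) • 1 := by
  ext i j
  fin_cases i <;> fin_cases j <;>
    simp [hat, vecMulVec_apply, Matrix.mul_apply, dotProduct, Fin.sum_univ_three] <;> ring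

lemma hat_starM {A : Matrix (Fin 3) (Fin 3) ℝ} (hA : Aᵀ = -A) : hat (starM A) = A := by
  have h (i j : Fin 3) : A j i = -A i j := congrFun (congrFun hA i) j
  ext i j
  fin_cases i <;> fin_cases j <;> simp [hat, starM] <;>
    linarith [h 0 0, h 1 1, h 2 2, h 0 1, h 0 2, h 1 2]

lemma mul_hat_add_hat_mul {S : Matrix (Fin 3) (Fin 3) ℝ} (hS : Sᵀ = S) (v : V3) :
    S * hat v + hat v * S = hat (S.trace • v - S *ᵥ v) := by
  have h (i j : Fin 3) : S j i = S i j := congrFun (congrFun hS i) j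
  ext i j
  simp only [Matrix.add_apply, Matrix.mul_apply, Fin.sum_univ_three]
  fin_cases i <;> fin_cases j <;>
    simp [hat, mulVec, dotProduct, Fin.sum_univ_three, trace, h 1 0, h 2 0, h 2 1] <;> ring

lemma hat_mulVec_of_trace_eq_zero {S : Matrix (Fin 3) (Fin 3) ℝ} (hS : Sᵀ = S)
    (hS₀ : S.trace = 0) (v : V3) : hat (S *ᵥ v) = -(S * hat v + hat v * S) := by
  rw [mul_hat_add_hat_mul hS, hS₀, zero_smul, zero_sub, hat_neg, neg_neg]

lemma transpose_mcomm (A B : Matrix (Fin 3) (Fin 3) ℝ) : (mcomm A B)ᵀ = mcomm Bᵀ Aᵀ := by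
  simp only [mcomm, transpose_sub, transpose_mul]

lemma trace_mcomm (A B : Matrix (Fin 3) (Fin 3) ℝ) : (mcomm A B).trace = 0 := by
  rw [mcomm, trace_sub, trace_mul_comm, sub_self]

lemma hat_starM_mcomm {S₁ S₂ : Matrix (Fin 3) (Fin 3) ℝ} (hS₁ : S₁ᵀ = S₁) (hS₂ : S₂ᵀ = S₂) :
    hat (starM (mcomm S₁ S₂)) = mcomm S₁ S₂ := by
  apply hat_starM
  rw [transpose_mcomm, hS₁, hS₂, mcomm, mcomm, neg_sub]

lemma transpose_odot (x y : V3) : (odot x y)ᵀ = odot x y := by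
  simp only [odot, transpose_sub, transpose_smul, transpose_add, transpose_vecMulVec,
    transpose_one, add_comm (vecMulVec y x)]

lemma trace_odot (x y : V3) : (odot x y).trace = 0 := by
  simp only [odot, trace_sub, trace_smul, trace_add, trace_vecMulVec, trace_one,
    Fintype.card_fin, dotProduct_comm y x, smul_eq_mul]
  ring

lemma M7_eq_fromBlocks (x y : V3) (S : Matrix (Fin 3) (Fin 3) ℝ) (w : V3) :
    M7 x y S w = fromBlocks 0
      (fromCols (replicateRow (Fin 1) ((-2 : ℝ) • y)) (replicateRow (Fin 1) ((-2 : ℝ) • x)))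
      (fromRows (replicateCol (Fin 1) x) (replicateCol (Fin 1) y))
      (fromBlocks (S + hat w) (hat y) (hat x) (-S + hat w)) := by
  ext (i | i | i) (j | j | j) <;> simp [M7]

theorem M7_commutator (x₁ x₂ y₁ y₂ w₁ w₂ : V3) {S₁ S₂ : Matrix (Fin 3) (Fin 3) ℝ}
    (hS₁ : S₁ᵀ = S₁) (hS₁₀ : S₁.trace = 0) (hS₂ : S₂ᵀ = S₂) (hS₂₀ : S₂.trace = 0) :
    M7 x₁ y₁ S₁ w₁ * M7 x₂ y₂ S₂ w₂ - M7 x₂ y₂ S₂ w₂ * M7 x₁ y₁ S₁ w₁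
      = M7 ((2 : ℝ) • cross y₁ y₂ + S₁.mulVec x₂ - S₂.mulVec x₁ + cross w₁ x₂ + cross x₁ w₂)
          ((2 : ℝ) • cross x₁ x₂ + S₂.mulVec y₁ - S₁.mulVec y₂ + cross w₁ y₂ + cross y₁ w₂)
          ((3 : ℝ) • odot x₂ y₁ - (3 : ℝ) • odot x₁ y₂ + mcomm (hat w₁) S₂ + mcomm S₁ (hat w₂))
          ((3 / 2 : ℝ) • (cross x₁ y₂ + cross y₁ x₂) + starM (mcomm S₁ S₂) + cross w₁ w₂) := by
  simp only [M7_eq_fromBlocks, fromBlocks_multiply, fromCols_mul_fromRows, fromCols_mul_fromBlocks,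
    fromBlocks_mul_fromRows, fromRows_mul_fromCols, Matrix.zero_mul, Matrix.mul_zero, zero_add,
    fromBlocks_add, fromBlocks_sub, fromCols_sub, fromRows_sub, cross_eq_crossProduct]
  congr 1
  · ext i j
    simp only [Matrix.sub_apply, Matrix.add_apply, replicateRow_mul_replicateCol_apply,
      Matrix.zero_apply, smul_dotProduct, dotProduct_comm x₁, dotProduct_comm x₂]
    ring
  · congr 1 <;> simp only [← replicateRow_vecMul, ← replicateRow_add, ← replicateRow_sub] <;>
      congr 1 <;>
      simp only [smul_vecMul, vecMul_add, vecMul_neg, vecMul_hat, mulVec_smul,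
        vecMul_eq_mulVec_of_transpose_eq hS₁, vecMul_eq_mulVec_of_transpose_eq hS₂,
        ← cross_anticomm y₁ y₂, ← cross_anticomm x₁ x₂, ← cross_anticomm w₁ y₂,
        ← cross_anticomm w₁ x₂] <;>
      module
  · congr 1 <;> simp only [← replicateCol_mulVec, ← replicateCol_add, ← replicateCol_sub] <;>
      congr 1 <;>
      simp only [add_mulVec, neg_mulVec, hat_mulVec, ← cross_anticomm y₁ y₂,
        ← cross_anticomm x₁ x₂, ← cross_anticomm x₁ w₂, ← cross_anticomm y₁ w₂] <;>
      module
  · congr 1 <;>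
      simp only [replicateCol_mul_replicateRow, hat_add, hat_sub, hat_smul,
        hat_starM_mcomm hS₁ hS₂, hat_mulVec_of_trace_eq_zero hS₁ hS₁₀,
        hat_mulVec_of_trace_eq_zero hS₂ hS₂₀] <;>
      simp only [odot, mcomm, hat_crossProduct, hat_mul_hat, vecMulVec_smul,
        dotProduct_comm x₁ y₂, dotProduct_comm x₂ y₁, dotProduct_comm w₂ w₁,
        dotProduct_comm y₂ w₁, dotProduct_comm w₂ y₁, dotProduct_comm x₂ w₁,
        dotProduct_comm w₂ x₁, add_mul, mul_add, neg_mul, mul_neg] <;>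
      module

/-- The commutator of `M(x₁,y₁,S₁,w₁)` and `M(x₂,y₂,S₂,w₂)` is again of the form
`M(⋯)`, with the stated components; in particular the 14-dimensional image of `M` is a
Lie subalgebra of the 7×7 real matrices (the split real form `𝔤₂ˢ`). -/
theorem stmt_13 :
    (∀ (x₁ x₂ y₁ y₂ w₁ w₂ : V3) (S₁ S₂ : Matrix (Fin 3) (Fin 3) ℝ),
      S₁ᵀ = S₁ → S₁.trace = 0 → S₂ᵀ = S₂ → S₂.trace = 0 →
      M7 x₁ y₁ S₁ w₁ * M7 x₂ y₂ S₂ w₂ - M7 x₂ y₂ S₂ w₂ * M7 x₁ y₁ S₁ w₁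
        = M7 ((2 : ℝ) • cross y₁ y₂ + S₁.mulVec x₂ - S₂.mulVec x₁ + cross w₁ x₂ + cross x₁ w₂)
            ((2 : ℝ) • cross x₁ x₂ + S₂.mulVec y₁ - S₁.mulVec y₂ + cross w₁ y₂ + cross y₁ w₂)
            ((3 : ℝ) • odot x₂ y₁ - (3 : ℝ) • odot x₁ y₂ + mcomm (hat w₁) S₂ + mcomm S₁ (hat w₂))
            ((3 / 2 : ℝ) • (cross x₁ y₂ + cross y₁ x₂) + starM (mcomm S₁ S₂) + cross w₁ w₂))
    ∧ ∀ A B, A ∈ g2sSet → B ∈ g2sSet → A * B - B * A ∈ g2sSet := by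
  refine ⟨fun x₁ x₂ y₁ y₂ w₁ w₂ S₁ S₂ hS₁ hS₁₀ hS₂ hS₂₀ =>
    M7_commutator x₁ x₂ y₁ y₂ w₁ w₂ hS₁ hS₁₀ hS₂ hS₂₀, ?_⟩
  rintro A B ⟨x₁, y₁, S₁, w₁, hS₁, hS₁₀, rfl⟩ ⟨x₂, y₂, S₂, w₂, hS₂, hS₂₀, rfl⟩
  refine ⟨_, _, _, _, ?_, ?_, M7_commutator x₁ x₂ y₁ y₂ w₁ w₂ hS₁ hS₁₀ hS₂ hS₂₀⟩
  · simp only [transpose_add, transpose_sub, transpose_smul, transpose_odot, transpose_mcomm,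
      transpose_hat, hS₁, hS₂]
    simp only [mcomm, neg_mul, mul_neg]
    abel
  · simp only [trace_add, trace_sub, trace_smul, trace_odot, trace_mcomm, smul_zero, sub_zero,
      add_zero]
end

section
/- Let c₁, …, c₉ ∈ ℝ and define an ℝ-bilinear skew-symmetric bracket on ℝ³ × ℝ³ × 𝔰 × ℝ³ by [(x₁,y₁,S₁,w₁),(x₂,y₂,S₂,w₂)] = (c₅(x₁×y₂ + y₁×x₂) + c₆(S₂y₁ − S₁y₂) + x₁×w₂ + w₁×x₂, x₁×x₂ + c₁·y₁×y₂ + c₃·★[S₁,S₂] + c₈(S₂x₁ − S₁x₂) + y₁×w₂ + w₁×y₂, x₁⊙y₂ − y₁⊙x₂ + c₇([★⁻¹y₁,S₂] − [★⁻¹y₂,S₁]) + [S₁,★⁻¹w₂] − [S₂,★⁻¹w₁], c₂·y₁×y₂ + c₄·★[S₁,S₂] + c₉(S₂x₁ − S₁x₂) + w₁×w₂). If this bracket satisfies the Jacobi identity, then, setting κ := c₅/7, one has c₁ = 2κ, c₂ = 15κ², c₃ = 0, c₄ = −144κ³, c₅ = 7κ, c₆ = 24κ², c₇ = 3κ, c₈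 = −6κ, and c₉ = 18κ². -/
open Matrix

/-- The underlying space `ℝ³ × ℝ³ × 𝔰 × ℝ³` (with `𝔰` realized inside all 3×3 matrices). -/
abbrev A14 := V3 × V3 × Matrix (Fin 3) (Fin 3) ℝ × V3

/-- Membership of an element of `A14` in `𝔤(κ) = ℝ³ × ℝ³ × 𝔰 × ℝ³`: the third component
must be symmetric and traceless. -/
def inA (u : A14) : Prop := u.2.2.1ᵀ = u.2.2.1 ∧ u.2.2.1.trace = 0

/-- The general `O(3)`-equivariant candidate bracket on `ℝ³ × ℝ³ × 𝔰 × ℝ³` with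
constants `c₁, …, c₉`. -/
noncomputable def cBracket (c₁ c₂ c₃ c₄ c₅ c₆ c₇ c₈ c₉ : ℝ) (u v : A14) : A14 :=
  let x₁ := u.1; let y₁ := u.2.1; let S₁ := u.2.2.1; let w₁ := u.2.2.2
  let x₂ := v.1; let y₂ := v.2.1; let S₂ := v.2.2.1; let w₂ := v.2.2.2
  ( c₅ • (cross x₁ y₂ + cross y₁ x₂) + c₆ • (S₂.mulVec y₁ - S₁.mulVec y₂)
      + cross x₁ w₂ + cross w₁ x₂,
    cross x₁ x₂ + c₁ • cross y₁ y₂ + c₃ • starM (mcomm S₁ S₂)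
      + c₈ • (S₂.mulVec x₁ - S₁.mulVec x₂) + cross y₁ w₂ + cross w₁ y₂,
    odot x₁ y₂ - odot y₁ x₂ + c₇ • (mcomm (hat y₁) S₂ - mcomm (hat y₂) S₁)
      + mcomm S₁ (hat w₂) - mcomm S₂ (hat w₁),
    c₂ • cross y₁ y₂ + c₄ • starM (mcomm S₁ S₂) + c₉ • (S₂.mulVec x₁ - S₁.mulVec x₂)
      + cross w₁ w₂ )

/-!
Evaluating the Jacobiator on a handful of triples of basis elements of `ℝ³ × ℝ³ × 𝔰 × ℝ³` and
reading off single entries gives eight polynomial relations among the constants. Three of them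
are linear in `c₁, c₅, c₇, c₈` and already force `c₇ = 3c₅/7`, `c₈ = -6c₅/7`, `c₁ = 2c₅/7`; the
remaining ones then determine `c₂, c₃, c₄, c₆, c₉` one after another.
-/

namespace CandidateBracket

def embX (x : V3) : A14 := (x, 0, 0, 0)
def embY (y : V3) : A14 := (0, y, 0, 0)
def embS (S : Matrix (Fin 3) (Fin 3) ℝ) : A14 := (0, 0, S, 0)

theorem inA_embX (x : V3) : inA (embX x) := by simp [inA, embX]
theorem inA_embY (y : V3) : inA (embY y) := by simp [inA, embY]
theorem inA_embS {S : Matrix (Fin 3) (Fin 3) ℝ} (hS : S.IsSymm) (htr : S.trace = 0) :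
    inA (embS S) := ⟨hS, htr⟩

def symOffDiag (i j : Fin 3) : Matrix (Fin 3) (Fin 3) ℝ := single i j 1 + single j i 1
def diagDiff (i j : Fin 3) : Matrix (Fin 3) (Fin 3) ℝ := single i i 1 - single j j 1

theorem symOffDiag_isSymm (i j : Fin 3) : (symOffDiag i j).IsSymm := by
  simp [symOffDiag, IsSymm, add_comm]
theorem trace_symOffDiag {i j : Fin 3} (h : i ≠ j) : (symOffDiag i j).trace = 0 := by
  simp [symOffDiag, h, h.symm]
theorem diagDiff_isSymm (i j : Fin 3) : (diagDiff i j).IsSymm := by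
  simp [diagDiff, IsSymm]
theorem trace_diagDiff (i j : Fin 3) : (diagDiff i j).trace = 0 := by
  simp [diagDiff]

variable (c₁ c₂ c₃ c₄ c₅ c₆ c₇ c₈ c₉ : ℝ)

noncomputable def jacobiator (u v w : A14) : A14 :=
  let b := cBracket c₁ c₂ c₃ c₄ c₅ c₆ c₇ c₈ c₉
  b (b u v) w + b (b v w) u + b (b w u) v

def SatisfiesJacobi : Prop :=
  ∀ u v w : A14, inA u → inA v → inA w → jacobiator c₁ c₂ c₃ c₄ c₅ c₆ c₇ c₈ c₉ u v w = 0

variable {c₁ c₂ c₃ c₄ c₅ c₆ c₇ c₈ c₉}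

set_option maxHeartbeats 1000000 in
theorem SatisfiesJacobi.relations (h : SatisfiesJacobi c₁ c₂ c₃ c₄ c₅ c₆ c₇ c₈ c₉) :
    c₁ = c₅ + 5 / 6 * c₈ ∧ c₂ = 5 / 6 * c₉ ∧ c₃ = 0 ∧ c₄ = 2 * c₉ * (c₇ - c₅) ∧
      c₆ = -c₅ * c₈ - c₉ ∧ 3 * c₇ = c₁ + c₅ ∧ c₈ = -2 * c₇ ∧ c₉ = -c₇ * c₈ := by
  have hX := inA_embX (Pi.single 0 1)
  have hX' := inA_embX (Pi.single 1 1)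
  have hY := inA_embY (Pi.single 0 1)
  have hY' := inA_embY (Pi.single 1 1)
  have hS₀₁ := inA_embS (symOffDiag_isSymm 0 1) (trace_symOffDiag (by decide))
  have hS₀₂ := inA_embS (symOffDiag_isSymm 0 2) (trace_symOffDiag (by decide))
  have hS₁₂ := inA_embS (symOffDiag_isSymm 1 2) (trace_symOffDiag (by decide))
  have hD₀₁ := inA_embS (diagDiff_isSymm 0 1) (trace_diagDiff 0 1)
  have hD₁₂ := inA_embS (diagDiff_isSymm 1 2) (trace_diagDiff 1 2)
  have h₁ := congrArg (fun p : A14 => p.2.1 1) (h _ _ _ hX hX' hY)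
  have h₂ := congrArg (fun p : A14 => p.2.2.2 1) (h _ _ _ hX hX' hY)
  have h₃ := congrArg (fun p : A14 => p.2.2.1 0 0) (h _ _ _ hX hS₁₂ hD₀₁)
  have h₄ := congrArg (fun p : A14 => p.2.2.2 1) (h _ _ _ hX hY' hS₁₂)
  have h₆ := congrArg (fun p : A14 => p.1 0) (h _ _ _ hX hX' hS₀₂)
  have h₇ := congrArg (fun p : A14 => p.2.2.1 0 2) (h _ _ _ hX hY hY')
  have h₈ := congrArg (fun p : A14 => p.2.2.1 0 0) (h _ _ _ hX hX' hS₀₁)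
  have h₉ := congrArg (fun p : A14 => p.2.2.1 1 2) (h _ _ _ hX hD₀₁ hD₁₂)
  simp only [jacobiator, cBracket, embX, embY, embS, symOffDiag, diagDiff, cross, hat, starM,
    odot, mcomm, Matrix.mulVec, Matrix.mul_apply, Matrix.vecMulVec_apply, Matrix.one_apply,
    dotProduct, Fin.sum_univ_three, Matrix.smul_apply, Matrix.add_apply, Matrix.sub_apply,
    Matrix.of_apply, Matrix.cons_val', Matrix.cons_val_zero, Matrix.cons_val_one,
    Matrix.head_cons, Matrix.head_fin_const, Matrix.cons_val_fin_one, Matrix.empty_val',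
    Pi.add_apply, Pi.sub_apply, Pi.smul_apply, Pi.zero_apply, Prod.fst_add, Prod.snd_add,
    Matrix.zero_apply, Prod.fst_zero, Prod.snd_zero, smul_eq_mul,
    Matrix.cons_val_two, Matrix.tail_cons, Pi.single_apply, single_apply]
    at h₁ h₂ h₃ h₄ h₆ h₇ h₈ h₉
  norm_num [Fin.ext_iff] at h₁ h₂ h₃ h₄ h₆ h₇ h₈ h₉
  refine ⟨?_, ?_, ?_, ?_, ?_, ?_, ?_, ?_⟩ <;> linarith

end CandidateBracket

/-- If the candidate bracket satisfies the Jacobi identity on `ℝ³ × ℝ³ × 𝔰 × ℝ³`, then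
with `κ := c₅/7` one has `c₁ = 2κ, c₂ = 15κ², c₃ = 0, c₄ = −144κ³, c₅ = 7κ, c₆ = 24κ²,
c₇ = 3κ, c₈ = −6κ, c₉ = 18κ²`. -/
theorem stmt_16 (c₁ c₂ c₃ c₄ c₅ c₆ c₇ c₈ c₉ : ℝ)
    (hJ : ∀ u v w : A14, inA u → inA v → inA w →
      cBracket c₁ c₂ c₃ c₄ c₅ c₆ c₇ c₈ c₉ (cBracket c₁ c₂ c₃ c₄ c₅ c₆ c₇ c₈ c₉ u v) w
        + cBracket c₁ c₂ c₃ c₄ c₅ c₆ c₇ c₈ c₉ (cBracket c₁ c₂ c₃ c₄ c₅ c₆ c₇ c₈ c₉ v w) u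
        + cBracket c₁ c₂ c₃ c₄ c₅ c₆ c₇ c₈ c₉ (cBracket c₁ c₂ c₃ c₄ c₅ c₆ c₇ c₈ c₉ w u) v
        = 0) :
    c₁ = 2 * (c₅ / 7) ∧ c₂ = 15 * (c₅ / 7) ^ 2 ∧ c₃ = 0 ∧ c₄ = -144 * (c₅ / 7) ^ 3
      ∧ c₅ = 7 * (c₅ / 7) ∧ c₆ = 24 * (c₅ / 7) ^ 2 ∧ c₇ = 3 * (c₅ / 7)
      ∧ c₈ = -6 * (c₅ / 7) ∧ c₉ = 18 * (c₅ / 7) ^ 2 := by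
  have hJac : CandidateBracket.SatisfiesJacobi c₁ c₂ c₃ c₄ c₅ c₆ c₇ c₈ c₉ := hJ
  obtain ⟨h₁, h₂, h₃, h₄, h₆, h₇, h₈, h₉⟩ := hJac.relations
  have hc₇ : c₇ = 3 * (c₅ / 7) := by linarith
  have hc₈ : c₈ = -6 * (c₅ / 7) := by linarith
  have hc₉ : c₉ = 18 * (c₅ / 7) ^ 2 := by rw [h₉, hc₇, hc₈]; ring
  refine ⟨by linarith, by rw [h₂, hc₉]; ring, h₃, by rw [h₄, hc₉, hc₇]; ring, by ring,
    by rw [h₆, hc₈, hc₉]; ring, hc₇, hc₈, hc₉⟩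
end
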